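/- Let (G,M,I) be a finite context with ∅'' = ∅, let z ∈ G and H = G ∖ {z}, let π□ be the finest extent partition of (G,M,I), let z^□□ be the class of π□ containing z, and assume z^□□ ≠ {z}. Then for each classification tree T_G in the box extent lattice B(G,M,I) there exists a classification tree T_H in the box extent lattice B(H, M, I ∩ (H×M)) of the subcontext such that T_G = T_H*, where T_H* = {E ∈ T_H : E is a box extent of (G,M,I)} ∪ {E ∪ {z} : E ∈ T_H, E ∪ {z} is a box extent of (G,M,I)}. -/
import Mathlib


open Set

variable {G M : Type*}

/-- The attribute-derivation `A'` of a set of objects (the restricted relation of a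
subcontext agrees with `I` on its object set, so no restriction is needed here). -/
def polarUp (I : G → M → Prop) (A : Set G) : Set M := {m | ∀ g ∈ A, I g m}

/-- The object-derivation `B'` of a set of attributes, computed in the subcontext whose
object set is `H` (relation `I ∩ H×M`). -/
def polarDown (I : G → M → Prop) (H : Set G) (B : Set M) : Set G :=
  {g | g ∈ H ∧ ∀ m ∈ B, I g m}

/-- The closure `A''` computed in the subcontext with object set `H`.
Taking `H = Set.univ` gives the closure in the full context `(G,M,I)`. -/
def cl2 (I : G → M → Prop) (H A : Set G) : Set G := polarDown I H (polarUp I A)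

/-- `A` is an extent of the subcontext with object set `H`. -/
def IsExtent (I : G → M → Prop) (H A : Set G) : Prop := A ⊆ H ∧ cl2 I H A = A

/-- An extent partition of the subcontext with object set `H`: a partition of `H`
all of whose classes are extents. -/
def IsExtentPartition (I : G → M → Prop) (H : Set G) (π : Set (Set G)) : Prop :=
  (∀ A ∈ π, A.Nonempty) ∧ π.Pairwise Disjoint ∧ ⋃₀ π = H ∧ ∀ A ∈ π, IsExtent I H A

/-- `E` is a box extent of the subcontext with object set `H`: a class of some extent
partition, or `∅''`. -/
def IsBoxExtent (I : G → M → Prop) (H E : Set G) : Prop :=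
  (∃ π : Set (Set G), IsExtentPartition I H π ∧ E ∈ π) ∨ E = cl2 I H ∅

/-- The finest extent partition: every class of every extent partition is a union of
its classes. -/
def IsFinestExtentPartition (I : G → M → Prop) (H : Set G) (π : Set (Set G)) : Prop :=
  IsExtentPartition I H π ∧
    ∀ σ : Set (Set G), IsExtentPartition I H σ → ∀ A ∈ σ, ∃ S ⊆ π, A = ⋃₀ S

/-- A classification tree in the box extent lattice of the subcontext with object set
`H`: a set of nonempty box extents such that for every nonempty box extent `X`,
`{E ∈ T | X ⊆ E}` is a nonempty chain under inclusion. -/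
def IsBoxClassTree (I : G → M → Prop) (H : Set G) (T : Set (Set G)) : Prop :=
  (∀ E ∈ T, E.Nonempty ∧ IsBoxExtent I H E) ∧
  ∀ X : Set G, X.Nonempty → IsBoxExtent I H X →
    ({E ∈ T | X ⊆ E}.Nonempty ∧ IsChain (· ⊆ ·) {E ∈ T | X ⊆ E})

/-- A maximal classification tree in the box extent lattice. -/
def IsMaxBoxClassTree (I : G → M → Prop) (H : Set G) (T : Set (Set G)) : Prop :=
  IsBoxClassTree I H T ∧ ∀ T' : Set (Set G), IsBoxClassTree I H T' → T ⊆ T' → T' = T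

/-- Given a classification tree `T` of the subcontext `(G ∖ {z}, M, I ∩ (G∖{z})×M)`,
`treeStar I z T = T⁽¹⁾ ∪ {E ∪ {z} | E ∈ T⁽²⁾}`, where `T⁽¹⁾` consists of the members of
`T` that are box extents of `(G,M,I)` and `T⁽²⁾` of those `E ∈ T` with `E ∪ {z}` a box
extent of `(G,M,I)`. -/
def treeStar (I : G → M → Prop) (z : G) (T : Set (Set G)) : Set (Set G) :=
  {E ∈ T | IsBoxExtent I Set.univ E} ∪
    (fun E => E ∪ {z}) '' {E ∈ T | IsBoxExtent I Set.univ (E ∪ {z})}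

section Auxiliary

variable (I : G → M → Prop)

lemma subset_cl2' {H A : Set G} (hA : A ⊆ H) : A ⊆ cl2 I H A :=
  fun g hg => ⟨hA hg, fun _ hm => hm g hg⟩

lemma cl2_subset_dom' {H A : Set G} : cl2 I H A ⊆ H := fun _ hg => hg.1

lemma cl2_mono' {H A B : Set G} (h : A ⊆ B) : cl2 I H A ⊆ cl2 I H B :=
  fun g hg => ⟨hg.1, fun m hm => hg.2 m (fun x hx => hm x (h hx))⟩

lemma cl2_inter' (H A : Set G) : cl2 I H A = cl2 I Set.univ A ∩ H := by
  ext g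
  constructor
  · exact fun hg => ⟨⟨trivial, hg.2⟩, hg.1⟩
  · exact fun hg => ⟨hg.2, hg.1.2⟩

/-- Saturation with respect to a family of classes. -/
def Satur (π : Set (Set G)) (A : Set G) : Prop :=
  ∀ C ∈ π, (C ∩ A).Nonempty → C ⊆ A

variable {I}

lemma pi_eq_of_mem {π : Set (Set G)} (hd : π.Pairwise Disjoint)
    {C D : Set G} (hC : C ∈ π) (hD : D ∈ π) {g : G} (hgC : g ∈ C) (hgD : g ∈ D) :
    C = D := by
  by_contra hne
  exact Set.disjoint_left.mp (hd hC hD hne) hgC hgD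

/-- A nonempty box extent of the full context is a closed, π-saturated set. -/
lemma box_extent_closed_satur {π : Set (Set G)}
    (hπ : IsFinestExtentPartition I Set.univ π)
    (hempty : cl2 I Set.univ (∅ : Set G) = ∅)
    {E : Set G} (hEne : E.Nonempty) (hE : IsBoxExtent I Set.univ E) :
    cl2 I Set.univ E = E ∧ Satur π E := by
  rcases hE with ⟨σ, hσ, hEσ⟩ | hE
  · refine ⟨(hσ.2.2.2 E hEσ).2, ?_⟩
    obtain ⟨S, hSπ, hES⟩ := hπ.2 σ hσ E hEσ
    rintro C hC ⟨g, hgC, hgE⟩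
    rw [hES] at hgE
    obtain ⟨D, hDS, hgD⟩ := hgE
    have hCD : C = D := pi_eq_of_mem hπ.1.2.1 hC (hSπ hDS) hgC hgD
    rw [hES]
    exact fun x hx => ⟨D, hDS, hCD ▸ hx⟩
  · rw [hE, hempty] at hEne
    exact absurd hEne (by simp)

/-- A nonempty closed π-saturated set is a box extent of the full context. -/
lemma closed_satur_box_extent {π : Set (Set G)}
    (hπ : IsFinestExtentPartition I Set.univ π)
    {E : Set G} (hEne : E.Nonempty) (hcl : cl2 I Set.univ E = E)
    (hsat : Satur π E) : IsBoxExtent I Set.univ E := by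
  left
  refine ⟨insert E {C ∈ π | C ∩ E = ∅}, ⟨?_, ?_, ?_, ?_⟩, Set.mem_insert _ _⟩
  · rintro A (rfl | ⟨hA, -⟩)
    · exact hEne
    · exact hπ.1.1 A hA
  · rintro A (rfl | ⟨hA, hAE⟩) B (rfl | ⟨hB, hBE⟩) hne
    · exact absurd rfl hne
    · exact Set.disjoint_left.mpr fun g hgA hgB =>
        (Set.eq_empty_iff_forall_notMem.mp hBE g) ⟨hgB, hgA⟩
    · exact Set.disjoint_left.mpr fun g hgA hgB =>
        (Set.eq_empty_iff_forall_notMem.mp hAE g) ⟨hgA, hgB⟩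
    · exact hπ.1.2.1 hA hB hne
  · apply Set.eq_univ_of_forall
    intro g
    have hg : g ∈ ⋃₀ π := hπ.1.2.2.1 ▸ Set.mem_univ g
    obtain ⟨C, hCπ, hgC⟩ := hg
    by_cases h : (C ∩ E).Nonempty
    · exact ⟨E, Set.mem_insert _ _, hsat C hCπ h hgC⟩
    · exact ⟨C, Set.mem_insert_of_mem _ ⟨hCπ, Set.not_nonempty_iff_eq_empty.mp h⟩, hgC⟩
  · rintro A (rfl | ⟨hA, -⟩)
    · exact ⟨Set.subset_univ _, hcl⟩
    · exact hπ.1.2.2.2 A hA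

end Auxiliary

/-- Every classification tree `T_G` in `B(G,M,I)` arises as `T_H*` for some
classification tree `T_H` in the box extent lattice of the subcontext
`(G ∖ {z}, M, I ∩ (G∖{z})×M)` (assuming `z^□□ ≠ {z}`). -/
theorem boxClassTree_eq_treeStar_of_subcontext
    [Fintype G] [Fintype M] (I : G → M → Prop)
    (hempty : cl2 I Set.univ (∅ : Set G) = ∅)
    (z : G) (π : Set (Set G)) (hπ : IsFinestExtentPartition I Set.univ π)
    (Z : Set G) (hZ : Z ∈ π) (hzZ : z ∈ Z) (hZne : Z ≠ {z})
    (TG : Set (Set G)) (hTG : IsBoxClassTree I Set.univ TG) :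
    ∃ TH : Set (Set G), IsBoxClassTree I (Set.univ \ {z}) TH ∧
      TG = treeStar I z TH := by
  classical
  obtain ⟨hTGmem, hTGtree⟩ := hTG
  set H : Set G := Set.univ \ {z} with hHdef
  -- a witness w ∈ Z, w ≠ z
  obtain ⟨w, hwZ, hwz⟩ : ∃ w ∈ Z, w ≠ z := by
    by_contra h
    push_neg at h
    exact hZne (Set.eq_singleton_iff_unique_mem.mpr ⟨hzZ, h⟩)
  have hπdisj := hπ.1.2.1
  have hZcl : cl2 I Set.univ Z = Z := (hπ.1.2.2.2 Z hZ).2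
  have hzC : ∀ C ∈ π, C ≠ Z → z ∉ C := fun C hC hne hz =>
    hne (pi_eq_of_mem hπdisj hC hZ hz hzZ)
  -- saturation and closedness of members of TG
  have hTGcl : ∀ E ∈ TG, cl2 I Set.univ E = E := fun E hE =>
    (box_extent_closed_satur hπ hempty (hTGmem E hE).1 (hTGmem E hE).2).1
  have hTGsat : ∀ E ∈ TG, Satur π E := fun E hE =>
    (box_extent_closed_satur hπ hempty (hTGmem E hE).1 (hTGmem E hE).2).2
  -- no member of TG is {z}
  have hnz : ∀ E ∈ TG, E ≠ {z} := by
    intro E hE hEz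
    have hZE : Z ⊆ E := hTGsat E hE Z hZ ⟨z, hzZ, hEz ▸ rfl⟩
    exact hZne (Set.Subset.antisymm (hEz ▸ hZE) (Set.singleton_subset_iff.mpr hzZ))
  have hdiffne : ∀ E ∈ TG, (E \ {z}).Nonempty := by
    intro E hE
    rcases Set.eq_empty_or_nonempty (E \ {z}) with h | h
    · exfalso
      apply hnz E hE
      apply Set.Subset.antisymm _ _
      · intro x hx
        by_contra hxz
        exact Set.eq_empty_iff_forall_notMem.mp h x ⟨hx, hxz⟩
      · intro x hx
        rcases (hTGmem E hE).1 with ⟨y, hy⟩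
        have hyz : y = z := by
          by_contra hyz
          exact Set.eq_empty_iff_forall_notMem.mp h y ⟨hy, hyz⟩
        rcases Set.mem_singleton_iff.mp hx
        exact hyz ▸ hy
    · exact h
  have hdiffsubH : ∀ A : Set G, A \ {z} ⊆ H := fun A g hg => ⟨trivial, hg.2⟩
  -- πH : the候补 classes in the subcontext
  set πH : Set (Set G) := insert (Z \ {z}) (π \ {Z}) with hπHdef
  have hπHne : ∀ A ∈ πH, A.Nonempty := by
    rintro A (rfl | ⟨hA, -⟩)
    · exact ⟨w, hwZ, hwz⟩
    · exact hπ.1.1 A hA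
  have hπHsubH : ∀ A ∈ πH, A ⊆ H := by
    rintro A (rfl | ⟨hA, hAZ⟩)
    · exact hdiffsubH Z
    · intro g hg
      refine ⟨trivial, fun hgz => ?_⟩
      rcases Set.mem_singleton_iff.mp hgz
      exact hzC A hA hAZ hg
  have hπHext : ∀ A ∈ πH, cl2 I H A = A := by
    have base : ∀ A ∈ πH, A ⊆ Set.univ → cl2 I Set.univ A ⊆ A ∪ {z} → cl2 I H A = A := by
      intro A hA _ hsub
      apply Set.Subset.antisymm
      · rw [cl2_inter' I H A]
        intro g hg
        rcases hsub hg.1 with h | h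
        · exact h
        · exact absurd h hg.2.2
      · exact subset_cl2' I (hπHsubH A hA)
    rintro A (rfl | ⟨hA, hAZ⟩)
    · refine base _ (Set.mem_insert _ _) (Set.subset_univ _) ?_
      intro g hg
      have : g ∈ Z := hZcl ▸ cl2_mono' I (Set.diff_subset) hg
      by_cases hgz : g = z
      · exact Or.inr hgz
      · exact Or.inl ⟨this, hgz⟩
    · refine base _ (Set.mem_insert_of_mem _ ⟨hA, hAZ⟩) (Set.subset_univ _) ?_
      intro g hg
      have : g ∈ A := ((hπ.1.2.2.2 A hA).2) ▸ hg
      exact Or.inl this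
  -- saturation of E \ {z} with respect to πH
  have hsatH : ∀ E ∈ TG, ∀ A ∈ πH, (A ∩ (E \ {z})).Nonempty → A ⊆ E \ {z} := by
    rintro E hE A (rfl | ⟨hA, hAZ⟩) ⟨g, hgA, hgE, hgz⟩
    · have hZE : Z ⊆ E := hTGsat E hE Z hZ ⟨g, hgA.1, hgE⟩
      exact fun x hx => ⟨hZE hx.1, hx.2⟩
    · have hAE : A ⊆ E := hTGsat E hE A hA ⟨g, hgA, hgE⟩
      exact fun x hx => ⟨hAE hx, fun hxz => by
        rcases Set.mem_singleton_iff.mp hxz; exact hzC A hA hAZ hx⟩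
  -- disjointness within πH
  have hπHdisj : ∀ A ∈ πH, ∀ B ∈ πH, A ≠ B → Disjoint A B := by
    rintro A (rfl | ⟨hA, hAZ⟩) B (rfl | ⟨hB, hBZ⟩) hne
    · exact absurd rfl hne
    · exact Set.disjoint_left.mpr fun g hgA hgB =>
        Set.disjoint_left.mp (hπdisj hZ hB (Ne.symm hBZ)) hgA.1 hgB
    · exact Set.disjoint_left.mpr fun g hgA hgB =>
        Set.disjoint_left.mp (hπdisj hA hZ hAZ) hgA hgB.1
    · exact hπdisj hA hB hne
  -- covering of H by πH
  have hπHcover : ∀ g ∈ H, ∃ A ∈ πH, g ∈ A := by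
    intro g hg
    have : g ∈ ⋃₀ π := hπ.1.2.2.1 ▸ Set.mem_univ g
    obtain ⟨C, hCπ, hgC⟩ := this
    by_cases hCZ : C = Z
    · exact ⟨Z \ {z}, Set.mem_insert _ _, ⟨hCZ ▸ hgC, hg.2⟩⟩
    · exact ⟨C, Set.mem_insert_of_mem _ ⟨hCπ, hCZ⟩, hgC⟩
  -- extent property of E \ {z} in the subcontext
  have hTHext : ∀ E ∈ TG, cl2 I H (E \ {z}) = E \ {z} := by
    intro E hE
    apply Set.Subset.antisymm
    · rw [cl2_inter' I H (E \ {z})]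
      intro g hg
      have hgE : g ∈ E := (hTGcl E hE) ▸ cl2_mono' I (Set.diff_subset) hg.1
      exact ⟨hgE, hg.2.2⟩
    · exact subset_cl2' I (hdiffsubH E)
  -- definition of TH
  refine ⟨(fun E => E \ {z}) '' TG, ⟨?_, ?_⟩, ?_⟩
  · -- every member of TH is a nonempty box extent of the subcontext
    rintro F ⟨E, hE, rfl⟩
    refine ⟨hdiffne E hE, Or.inl ⟨insert (E \ {z}) {A ∈ πH | A ∩ (E \ {z}) = ∅},
      ⟨?_, ?_, ?_, ?_⟩, Set.mem_insert _ _⟩⟩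
    · rintro A (rfl | ⟨hA, -⟩)
      · exact hdiffne E hE
      · exact hπHne A hA
    · rintro A (rfl | ⟨hA, hAF⟩) B (rfl | ⟨hB, hBF⟩) hne
      · exact absurd rfl hne
      · exact Set.disjoint_left.mpr fun g hgA hgB =>
          Set.eq_empty_iff_forall_notMem.mp hBF g ⟨hgB, hgA⟩
      · exact Set.disjoint_left.mpr fun g hgA hgB =>
          Set.eq_empty_iff_forall_notMem.mp hAF g ⟨hgA, hgB⟩
      · exact hπHdisj A hA B hB hne
    · apply Set.Subset.antisymm
      · rintro g ⟨A, (rfl | ⟨hA, -⟩), hgA⟩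
        · exact hdiffsubH E hgA
        · exact hπHsubH A hA hgA
      · intro g hg
        obtain ⟨A, hA, hgA⟩ := hπHcover g hg
        by_cases h : (A ∩ (E \ {z})).Nonempty
        · exact ⟨E \ {z}, Set.mem_insert _ _, hsatH E hE A hA h hgA⟩
        · exact ⟨A, Set.mem_insert_of_mem _ ⟨hA, Set.not_nonempty_iff_eq_empty.mp h⟩, hgA⟩
    · rintro A (rfl | ⟨hA, -⟩)
      · exact ⟨hdiffsubH E, hTHext E hE⟩
      · exact ⟨hπHsubH A hA, hπHext A hA⟩
  · -- the classification tree condition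
    intro X hXne hXbox
    have hXsubH : X ⊆ H := by
      rcases hXbox with ⟨σ, hσ, hXσ⟩ | hX
      · exact hσ.2.2.1 ▸ fun g hg => ⟨X, hXσ, hg⟩
      · exact hX ▸ cl2_subset_dom' I
    -- the least closed saturated superset of X
    set SX : Set (Set G) := {F | X ⊆ F ∧ cl2 I Set.univ F = F ∧ Satur π F} with hSXdef
    have hunivSX : Set.univ ∈ SX :=
      ⟨Set.subset_univ _,
        Set.Subset.antisymm (Set.subset_univ _) (subset_cl2' I (le_refl _)),
        fun C _ _ => Set.subset_univ _⟩
    set Y : Set G := ⋂₀ SX with hYdef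
    have hXY : X ⊆ Y := Set.subset_sInter fun F hF => hF.1
    have hYcl : cl2 I Set.univ Y = Y := by
      apply Set.Subset.antisymm
      · apply Set.subset_sInter
        intro F hF
        exact hF.2.1 ▸ cl2_mono' I (Set.sInter_subset_of_mem hF)
      · exact subset_cl2' I (Set.subset_univ _)
    have hYsat : Satur π Y := by
      rintro C hC ⟨g, hgC, hgY⟩
      exact Set.subset_sInter fun F hF =>
        hF.2.2 C hC ⟨g, hgC, Set.sInter_subset_of_mem hF hgY⟩
    have hYne : Y.Nonempty := hXne.mono hXY
    have hYbox : IsBoxExtent I Set.univ Y := closed_satur_box_extent hπ hYne hYcl hYsat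
    have hYE : ∀ E ∈ TG, X ⊆ E → Y ⊆ E := fun E hE hXE =>
      Set.sInter_subset_of_mem ⟨hXE, hTGcl E hE, hTGsat E hE⟩
    obtain ⟨⟨E₀, hE₀, hYE₀⟩, hchain⟩ := hTGtree Y hYne hYbox
    have hXdiff : ∀ E : Set G, X ⊆ E → X ⊆ E \ {z} := fun E hXE g hg =>
      ⟨hXE hg, (hXsubH hg).2⟩
    constructor
    · exact ⟨E₀ \ {z}, ⟨E₀, hE₀, rfl⟩, hXdiff E₀ (hXY.trans hYE₀)⟩
    · rintro F₁ ⟨⟨E₁, hE₁, rfl⟩, hXF₁⟩ F₂ ⟨⟨E₂, hE₂, rfl⟩, hXF₂⟩ hne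
      have hY₁ : Y ⊆ E₁ := hYE E₁ hE₁ ((Set.subset_diff.mp hXF₁).1)
      have hY₂ : Y ⊆ E₂ := hYE E₂ hE₂ ((Set.subset_diff.mp hXF₂).1)
      have hE₁₂ : E₁ ≠ E₂ := fun h => hne (h ▸ rfl)
      rcases hchain ⟨hE₁, hY₁⟩ ⟨hE₂, hY₂⟩ hE₁₂ with h | h
      · exact Or.inl (Set.diff_subset_diff_left h)
      · exact Or.inr (Set.diff_subset_diff_left h)
  · -- TG = treeStar I z TH
    ext A
    constructor
    · intro hA
      by_cases hzA : z ∈ A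
      · right
        have hAu : (A \ {z}) ∪ {z} = A := by
          rw [Set.diff_union_self]
          exact Set.union_eq_self_of_subset_right (Set.singleton_subset_iff.mpr hzA)
        refine ⟨A \ {z}, ⟨⟨A, hA, rfl⟩, ?_⟩, hAu⟩
        show IsBoxExtent I Set.univ ((A \ {z}) ∪ {z})
        rw [hAu]
        exact (hTGmem A hA).2
      · left
        exact ⟨⟨A, hA, Set.diff_singleton_eq_self hzA⟩, (hTGmem A hA).2⟩
    · rintro (⟨⟨E, hE, rfl⟩, hAbox⟩ | ⟨F, ⟨⟨E, hE, rfl⟩, hFbox⟩, rfl⟩)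
      · -- first component: E \ {z} is a box extent of (G,M,I)
        by_cases hzE : z ∈ E
        · exfalso
          have hZE : Z ⊆ E := hTGsat E hE Z hZ ⟨z, hzZ, hzE⟩
          have hsatF : Satur π (E \ {z}) :=
            (box_extent_closed_satur hπ hempty (hdiffne E hE) hAbox).2
          have hZF : Z ⊆ E \ {z} := hsatF Z hZ ⟨w, hwZ, hZE hwZ, hwz⟩
          exact (hZF hzZ).2 rfl
        · show E \ {z} ∈ TG
          rw [Set.diff_singleton_eq_self hzE]
          exact hE
      · -- second component: (E \ {z}) ∪ {z} is a box extent of (G,M,I)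
        by_cases hzE : z ∈ E
        · have : (E \ {z}) ∪ {z} = E := by
            rw [Set.diff_union_self]
            exact Set.union_eq_self_of_subset_right (Set.singleton_subset_iff.mpr hzE)
          show (E \ {z}) ∪ {z} ∈ TG
          rw [this]
          exact hE
        · exfalso
          have heq : (E \ {z}) ∪ {z} = E ∪ {z} := by
            rw [Set.diff_union_self]
          rw [heq] at hFbox
          have hne : (E ∪ {z}).Nonempty := ⟨z, Or.inr rfl⟩
          have hsat : Satur π (E ∪ {z}) :=
            (box_extent_closed_satur hπ hempty hne hFbox).2
          have hZEz : Z ⊆ E ∪ {z} := hsat Z hZ ⟨z, hzZ, Or.inr rfl⟩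
          have hwE : w ∈ E := by
            rcases hZEz hwZ with h | h
            · exact h
            · exact absurd (Set.mem_singleton_iff.mp h) hwz
          have hZE : Z ⊆ E := hTGsat E hE Z hZ ⟨w, hwZ, hwE⟩
          exact hzE (hZE hzZ)
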